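/- arXiv:1408.2646 — 3 statements merged into one kernel-verified Lean document; each statement's English description precedes it below -/
import Mathlib

section
/- Let d > 1 be an integer and define ν(n) := ∑_{m ∣ n} μ(n/m)(d^m + 1) for n ≥ 1. Then for every n ≥ 2, ν(n) ≥ 0, and moreover ν(n) ≤ d^n + 1. -/
/-!
Möbius inversion gives `∑_{m ∣ n} ν(m) = d^n + 1`. Since `|μ| ≤ 1`, `ν(n)` is at least
`d^n + 1 - ∑ (d^m + 1)` over the proper divisors `m` of `n`; these satisfy `m ≤ n/2`, and for
`d ≥ 2` the sum over `m ≤ n/2` is at most `d^n + 1`, so `ν(n) ≥ 0` for every `n`. Feeding this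
back into the inversion formula gives `ν(n) = d^n + 1 - ∑_{m ∣ n, m < n} ν(m) ≤ d^n + 1`.
-/

open ArithmeticFunction Finset

theorem Nat.properDivisors_subset_Icc_one_half (n : ℕ) :
    n.properDivisors ⊆ Icc 1 (n / 2) := by
  intro m hm
  have hm_pos := Nat.pos_of_mem_properDivisors hm
  have hquot := Nat.one_lt_div_of_mem_properDivisors hm
  have hdvd := (Nat.mem_properDivisors.1 hm).1
  rw [mem_Icc, Nat.le_div_iff_mul_le two_pos]
  refine ⟨hm_pos, ?_⟩
  calc m * 2 ≤ m * (n / m) := Nat.mul_le_mul_left m hquot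
    _ = n := Nat.mul_div_cancel' hdvd

theorem sum_divisors_sum_moebius_mul {R : Type*} [NonAssocRing R] (g : ℕ → R) {n : ℕ}
    (hn : 0 < n) :
    ∑ i ∈ n.divisors, ∑ m ∈ i.divisors, (moebius (i / m) : R) * g m = g n :=
  sum_eq_iff_sum_mul_moebius_eq.2 (fun _ _ =>
    Nat.sum_divisorsAntidiagonal' fun a b => (moebius a : R) * g b) n hn

theorem sub_sum_properDivisors_le_sum_moebius_mul (f : ℕ → ℤ) (hf : ∀ m, 0 ≤ f m) {n : ℕ}
    (hn : 0 < n) :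
    f n - ∑ m ∈ n.properDivisors, f m ≤ ∑ m ∈ n.divisors, (moebius (n / m) : ℤ) * f m := by
  rw [← Nat.cons_self_properDivisors hn.ne', sum_cons, Nat.div_self hn, moebius_apply_one,
    one_mul, sub_eq_add_neg, ← sum_neg_distrib]
  gcongr with m
  have hμ := abs_le.1 (abs_moebius_le_one (n := n / m))
  nlinarith [hf m]

theorem sum_Icc_one_pow_add_one_le {d : ℤ} (hd : 1 < d) (k : ℕ) :
    ∑ m ∈ Icc 1 k, (d ^ m + 1) ≤ d ^ (2 * k) + 1 := by
  induction k with
  | zero => simp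
  | succ k ih =>
    rw [sum_Icc_succ_top (by omega)]
    have h_one : 1 ≤ d ^ (2 * k) := one_le_pow₀ (by omega)
    have h_low : d ^ (k + 1) ≤ d ^ (2 * k + 1) := pow_le_pow_right₀ (by omega) (by omega)
    have h_top : d ^ (2 * k + 1) + 2 * d ^ (2 * k) ≤ d ^ (2 * (k + 1)) := by
      have h_split : d ^ (2 * (k + 1)) - d ^ (2 * k + 1) - 2 * d ^ (2 * k)
          = d ^ (2 * k) * ((d - 2) * (d + 1)) := by ring
      have : 0 ≤ d ^ (2 * k) * ((d - 2) * (d + 1)) := by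
        apply mul_nonneg (by positivity) (mul_nonneg _ _) <;> omega
      linarith
    linarith

theorem sum_properDivisors_pow_add_one_le {d : ℤ} (hd : 1 < d) (n : ℕ) :
    ∑ m ∈ n.properDivisors, (d ^ m + 1) ≤ d ^ n + 1 :=
  calc ∑ m ∈ n.properDivisors, (d ^ m + 1)
      ≤ ∑ m ∈ Icc 1 (n / 2), (d ^ m + 1) :=
        sum_le_sum_of_subset_of_nonneg (Nat.properDivisors_subset_Icc_one_half n)
          fun _ _ _ => by positivity
    _ ≤ d ^ (2 * (n / 2)) + 1 := sum_Icc_one_pow_add_one_le hd _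
    _ ≤ d ^ n + 1 := by gcongr <;> omega

/-- The number `ν(n)` of periodic points of formally exact period `n` of a degree-`d` map
on `ℙ¹`. -/
def dynatomicCount (d : ℤ) (n : ℕ) : ℤ :=
  ∑ m ∈ n.divisors, (moebius (n / m) : ℤ) * (d ^ m + 1)

theorem sum_divisors_dynatomicCount (d : ℤ) {n : ℕ} (hn : 0 < n) :
    ∑ m ∈ n.divisors, dynatomicCount d m = d ^ n + 1 :=
  sum_divisors_sum_moebius_mul (fun m => d ^ m + 1) hn

theorem dynatomicCount_nonneg {d : ℤ} (hd : 1 < d) (n : ℕ) : 0 ≤ dynatomicCount d n := by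
  rcases Nat.eq_zero_or_pos n with rfl | hn
  · simp [dynatomicCount]
  have h_pos : ∀ m, 0 ≤ d ^ m + 1 := fun m => by positivity
  have h_lower := sub_sum_properDivisors_le_sum_moebius_mul (fun m => d ^ m + 1) h_pos hn
  have h_proper := sum_properDivisors_pow_add_one_le hd n
  unfold dynatomicCount
  linarith

theorem dynatomicCount_le {d : ℤ} (hd : 1 < d) (n : ℕ) : dynatomicCount d n ≤ d ^ n + 1 := by
  rcases Nat.eq_zero_or_pos n with rfl | hn
  · simp [dynatomicCount]
  have h_inv := sum_divisors_dynatomicCount d hn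
  rw [← Nat.cons_self_properDivisors hn.ne', sum_cons] at h_inv
  have h_proper := sum_nonneg fun m (_ : m ∈ n.properDivisors) => dynatomicCount_nonneg hd m
  linarith

theorem dynatomic_degree_nonneg_le_general (d : ℤ) (hd : 1 < d) (n : ℕ) :
    0 ≤ ∑ m ∈ n.divisors, (moebius (n / m) : ℤ) * (d ^ m + 1) ∧
      ∑ m ∈ n.divisors, (moebius (n / m) : ℤ) * (d ^ m + 1) ≤ d ^ n + 1 :=
  ⟨dynatomicCount_nonneg hd n, dynatomicCount_le hd n⟩

theorem dynatomic_degree_nonneg_le (d : ℤ) (hd : 1 < d) (n : ℕ) (hn : 2 ≤ n) :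
    0 ≤ ∑ m ∈ n.divisors, (moebius (n / m) : ℤ) * (d ^ m + 1) ∧
      ∑ m ∈ n.divisors, (moebius (n / m) : ℤ) * (d ^ m + 1) ≤ d ^ n + 1 :=
  dynatomic_degree_nonneg_le_general d hd n
end

section
/- Let (φ_j) be a sequence of subharmonic functions on a domain U ⊆ ℝⁿ that is locally uniformly bounded above. If φ(x) := lim_{j→∞} φ_j(x) exists for Lebesgue-almost every x ∈ U, then φ_j → φ in L¹_loc(U). -/
open MeasureTheory Metric

/-- A function is subharmonic on an open set `U` in Euclidean space if it is
upper semicontinuous on `U`, locally integrable on `U`, and satisfies the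
sub-mean value inequality on closed balls contained in `U`. -/
def SubharmonicOn {n : ℕ} (φ : EuclideanSpace ℝ (Fin n) → ℝ)
    (U : Set (EuclideanSpace ℝ (Fin n))) : Prop :=
  UpperSemicontinuousOn φ U ∧ LocallyIntegrableOn φ U volume ∧
    ∀ x ∈ U, ∀ r > (0 : ℝ), closedBall x r ⊆ U →
      φ x ≤ ⨍ y in closedBall x r, φ y ∂volume

/-!
Fix a compact `K ⊆ U`, a closed thickening `K'` of `K` inside `U` and an upper bound `M` of all
`φ j` on `K'`. The functions `M - φ j` are nonnegative and satisfy the super-mean value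
inequality, and they are bounded in `L¹(K')`: by connectedness of `U`, the integrals of the `φ j`
over small balls stay bounded below around every point, starting from a point where the `φ j`
converge. Averaging over balls of radius `r`,
`∫_K (M - φ j) ≤ ∫_{x ∈ cthickening r K} ⨍_{closedBall x r} (M - φ j)`, where the ball averages
are bounded uniformly in `j` and by `M - φ j x`. The reverse Fatou lemma and `r → 0` give
`limsup ∫_K (M - φ j) ≤ ∫_K (M - φ)`, Fatou's lemma the reverse inequality, and Scheffé's lemma
turns convergence of the integrals into `L¹(K)` convergence.
-/

open Filter Set Topology
open scoped ENNReal

section MeasureSpace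

variable {α : Type*} [MeasurableSpace α] {μ : Measure α} {f : α → ℝ} {s t : Set α} {M : ℝ}

lemma setLIntegral_ofReal_const_sub_eq (hs : MeasurableSet s) (hμs : μ s ≠ ∞)
    (hf : IntegrableOn f s μ) (hM : ∀ x ∈ s, f x ≤ M) :
    ∫⁻ x in s, ENNReal.ofReal (M - f x) ∂μ
      = ENNReal.ofReal (M * μ.real s - ∫ x in s, f x ∂μ) := by
  have hint : IntegrableOn (fun x => M - f x) s μ := (integrableOn_const hμs).sub hf
  rw [← ofReal_integral_eq_lintegral_ofReal hint
      ((ae_restrict_mem hs).mono fun x hx => sub_nonneg.2 (hM x hx)),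
    integral_sub (integrableOn_const hμs : IntegrableOn (fun _ => M) s μ) hf,
    setIntegral_const, smul_eq_mul, mul_comm]

lemma setLIntegral_ofReal_const_sub_le (hs : MeasurableSet s) (hμs : μ s ≠ ∞)
    (hf : IntegrableOn f s μ) (hM : ∀ x ∈ s, f x ≤ M) {C : ℝ} (hC : C ≤ ∫ x in s, f x ∂μ) :
    ∫⁻ x in s, ENNReal.ofReal (M - f x) ∂μ ≤ ENNReal.ofReal (M * μ.real s - C) := by
  rw [setLIntegral_ofReal_const_sub_eq hs hμs hf hM]
  exact ENNReal.ofReal_le_ofReal (by linarith)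

lemma mul_le_setIntegral_of_le_setAverage {x : α} (hμs₀ : μ s ≠ 0) (hμs : μ s ≠ ∞)
    (hx : f x ≤ ⨍ y in s, f y ∂μ) : μ.real s * f x ≤ ∫ y in s, f y ∂μ := by
  have hpos : 0 < μ.real s := ENNReal.toReal_pos hμs₀ hμs
  rwa [setAverage_eq, smul_eq_mul, le_inv_mul_iff₀ hpos] at hx

lemma setIntegral_sub_le_setIntegral_of_subset (hs : MeasurableSet s) (hμs : μ s ≠ ∞)
    (ht : MeasurableSet t) (hts : t ⊆ s) (hf : IntegrableOn f s μ) (hM : ∀ x ∈ s, f x ≤ M) :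
    ∫ x in s, f x ∂μ - max M 0 * μ.real s ≤ ∫ x in t, f x ∂μ := by
  have hdiff : ∫ x in s \ t, f x ∂μ ≤ max M 0 * μ.real s :=
    calc ∫ x in s \ t, f x ∂μ ≤ ∫ _ in s \ t, max M 0 ∂μ :=
          setIntegral_mono_on (hf.mono_set sdiff_subset)
            (integrableOn_const (measure_ne_top_of_subset sdiff_subset hμs)) (hs.diff ht)
            fun x hx => (hM x hx.1).trans (le_max_left _ _)
      _ = μ.real (s \ t) * max M 0 := by rw [setIntegral_const, smul_eq_mul]
      _ ≤ μ.real s * max M 0 :=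
          mul_le_mul_of_nonneg_right (measureReal_mono sdiff_subset hμs) (le_max_right _ _)
      _ = max M 0 * μ.real s := mul_comm _ _
  linarith [setIntegral_sdiff ht hf hts]

/-- Scheffé's lemma. -/
lemma tendsto_integral_abs_sub_of_tendsto_integral {F : ℕ → α → ℝ} {G : α → ℝ}
    (hF : ∀ j, Integrable (F j) μ) (hG : Integrable G μ) (hF₀ : ∀ j, 0 ≤ᵐ[μ] F j)
    (hlim : ∀ᵐ x ∂μ, Tendsto (F · x) atTop (𝓝 (G x)))
    (hint : Tendsto (fun j => ∫ x, F j x ∂μ) atTop (𝓝 (∫ x, G x ∂μ))) :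
    Tendsto (fun j => ∫ x, |F j x - G x| ∂μ) atTop (𝓝 0) := by
  have hpos : Tendsto (fun j => ∫ x, max (G x - F j x) 0 ∂μ) atTop (𝓝 0) := by
    simpa using tendsto_integral_of_dominated_convergence (fun x => |G x|)
      (fun j => (hG.sub (hF j)).pos_part.aestronglyMeasurable) hG.abs
      (fun j => (hF₀ j).mono fun x (hx : 0 ≤ F j x) => by
        rw [Real.norm_of_nonneg (le_max_right _ _)]
        exact max_le (by simp only [Pi.sub_apply]; linarith [le_abs_self (G x)])
          (abs_nonneg _))
      (hlim.mono fun x hx => (tendsto_const_nhds.sub hx).max tendsto_const_nhds)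
  have habs : ∀ j, ∫ x, |F j x - G x| ∂μ
      = (∫ x, F j x ∂μ - ∫ x, G x ∂μ) + 2 * ∫ x, max (G x - F j x) 0 ∂μ := by
    intro j
    have hpt : ∀ x, |F j x - G x| = (F j x - G x) + 2 * max (G x - F j x) 0 := fun x => by
      rcases le_total (F j x) (G x) with h | h
      · rw [abs_of_nonpos (by linarith), max_eq_left (by linarith)]; ring
      · rw [abs_of_nonneg (by linarith), max_eq_right (by linarith)]; ring
    have hsub : Integrable (fun x => F j x - G x) μ := (hF j).sub hG
    have hmax : Integrable (fun x => 2 * max (G x - F j x) 0) μ :=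
      (hG.sub (hF j)).pos_part.const_mul 2
    simp_rw [hpt]
    rw [integral_add hsub hmax, integral_sub (hF j) hG, integral_const_mul]
  simpa [habs] using (hint.sub_const (∫ x, G x ∂μ)).add (hpos.const_mul 2)

end MeasureSpace

section BallAverage

variable {α : Type*} [PseudoMetricSpace α] [SecondCountableTopology α] [MeasurableSpace α]
  [OpensMeasurableSpace α] {μ : Measure α} [SFinite μ] {g : α → ℝ≥0∞}

lemma measurableSet_dist_le (r : ℝ) : MeasurableSet {p : α × α | dist p.2 p.1 ≤ r} :=
  (isClosed_le (continuous_snd.dist continuous_fst) continuous_const).measurableSet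

lemma measurable_setLIntegral_closedBall (hg : AEMeasurable g μ) (r : ℝ) :
    Measurable fun x => ∫⁻ y in closedBall x r, g y ∂μ := by
  have hmk : (fun x => ∫⁻ y in closedBall x r, g y ∂μ) = fun x =>
      ∫⁻ y, {p : α × α | dist p.2 p.1 ≤ r}.indicator (fun p => hg.mk g p.2) (x, y) ∂μ := by
    funext x
    rw [← lintegral_indicator measurableSet_closedBall]
    refine lintegral_congr_ae (hg.ae_eq_mk.mono fun y hy => ?_)
    classical
    simp [indicator_apply, hy]
  rw [hmk]
  exact ((hg.measurable_mk.comp measurable_snd).indicator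
    (measurableSet_dist_le r)).lintegral_prod_right'

lemma setLIntegral_setLIntegral_closedBall_eq (hg : AEMeasurable g μ) (T : Set α) (r : ℝ) :
    ∫⁻ x in T, ∫⁻ y in closedBall x r, g y ∂μ ∂μ = ∫⁻ y, g y * μ (closedBall y r ∩ T) ∂μ := by
  have hF : AEMeasurable (Function.uncurry fun x y => (closedBall x r).indicator g y)
      ((μ.restrict T).prod μ) := by
    have : Function.uncurry (fun x y => (closedBall x r).indicator g y)
        = {p : α × α | dist p.2 p.1 ≤ r}.indicator (fun p => g p.2) := by
      funext ⟨x, y⟩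
      classical
      simp [indicator_apply]
    rw [this]
    exact hg.comp_snd.indicator (measurableSet_dist_le r)
  calc ∫⁻ x in T, ∫⁻ y in closedBall x r, g y ∂μ ∂μ
      = ∫⁻ x in T, ∫⁻ y, (closedBall x r).indicator g y ∂μ ∂μ := by
        simp_rw [lintegral_indicator measurableSet_closedBall]
    _ = ∫⁻ y, ∫⁻ x in T, (closedBall x r).indicator g y ∂μ ∂μ := lintegral_lintegral_swap hF
    _ = ∫⁻ y, g y * μ (closedBall y r ∩ T) ∂μ := by
        congr with y
        have : (fun x => (closedBall x r).indicator g y)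
            = (closedBall y r).indicator fun _ => g y := by
          funext x
          classical
          simp [indicator_apply, dist_comm]
        rw [this, lintegral_indicator_const measurableSet_closedBall,
          Measure.restrict_apply measurableSet_closedBall, mul_comm]

end BallAverage

section AddHaar

variable {E : Type*} [NormedAddCommGroup E] [NormedSpace ℝ E] [FiniteDimensional ℝ E]
  [MeasurableSpace E] [BorelSpace E] {μ : Measure E} [μ.IsAddHaarMeasure]
  {K : Set E} {Λ : ℝ≥0∞}

lemma setLIntegral_mul_le_setLIntegral_cthickening {g : E → ℝ≥0∞} (hg : AEMeasurable g μ)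
    (hK : MeasurableSet K) (r : ℝ) :
    (∫⁻ y in K, g y ∂μ) * μ (closedBall 0 r)
      ≤ ∫⁻ x in cthickening r K, ∫⁻ y in closedBall x r, g y ∂μ ∂μ := by
  rw [setLIntegral_setLIntegral_closedBall_eq hg,
    ← lintegral_mul_const' _ _ measure_closedBall_lt_top.ne, ← lintegral_indicator hK]
  refine lintegral_mono fun y => ?_
  by_cases hy : y ∈ K
  · rw [indicator_of_mem hy, inter_eq_self_of_subset_left (closedBall_subset_cthickening hy r),
      μ.addHaar_closedBall_center y r]
  · rw [indicator_of_notMem hy]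
    exact zero_le

/-- Unlike the `g j` themselves, their averages over balls of radius `r` are bounded uniformly
(by `Λ / μ (closedBall 0 r)`), so the reverse Fatou lemma applies to them. -/
lemma limsup_setLIntegral_le_setLIntegral_cthickening {g : ℕ → E → ℝ≥0∞} {g₀ : E → ℝ≥0∞}
    (hK : IsCompact K) (hg : ∀ j, AEMeasurable (g j) μ) (hΛ : Λ ≠ ∞)
    (hbound : ∀ j, ∫⁻ x, g j x ∂μ ≤ Λ)
    {r : ℝ} (hr : 0 < r)
    (hmean : ∀ j, ∀ x ∈ cthickening r K,
      ∫⁻ y in closedBall x r, g j y ∂μ ≤ μ (closedBall x r) * g j x)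
    (hlim : ∀ᵐ x ∂μ, Tendsto (g · x) atTop (𝓝 (g₀ x))) :
    limsup (fun j => ∫⁻ x in K, g j x ∂μ) atTop ≤ ∫⁻ x in cthickening r K, g₀ x ∂μ := by
  set c := μ (closedBall (0 : E) r)
  have hc₀ : c ≠ 0 := (measure_closedBall_pos μ 0 hr).ne'
  have hc : c ≠ ∞ := measure_closedBall_lt_top.ne
  set H : ℕ → E → ℝ≥0∞ := fun j x => c⁻¹ * ∫⁻ y in closedBall x r, g j y ∂μ
  have hH_meas : ∀ j, Measurable (H j) := fun j =>
    (measurable_setLIntegral_closedBall (hg j) r).const_mul _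
  have hle_H : ∀ j, ∫⁻ x in K, g j x ∂μ ≤ ∫⁻ x in cthickening r K, H j x ∂μ := fun j => by
    rw [lintegral_const_mul _ (measurable_setLIntegral_closedBall (hg j) r),
      ← ENNReal.div_eq_inv_mul, ENNReal.le_div_iff_mul_le (.inl hc₀) (.inl hc)]
    exact setLIntegral_mul_le_setLIntegral_cthickening (hg j) hK.measurableSet r
  have hH_bound : ∀ j, H j ≤ fun _ => c⁻¹ * Λ := fun j x =>
    mul_le_mul_right ((setLIntegral_le_lintegral _ _).trans (hbound j)) _
  have hH_limsup : ∀ᵐ x ∂μ.restrict (cthickening r K), limsup (H · x) atTop ≤ g₀ x := by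
    filter_upwards [ae_restrict_mem isClosed_cthickening.measurableSet, ae_restrict_of_ae hlim]
      with x hx hx_lim
    have hH_le : ∀ j, H j x ≤ g j x := fun j =>
      calc H j x ≤ c⁻¹ * (c * g j x) := by
            simpa only [H, μ.addHaar_closedBall_center x r] using
              mul_le_mul_right (hmean j x hx) c⁻¹
        _ = g j x := by rw [← mul_assoc, ENNReal.inv_mul_cancel hc₀ hc, one_mul]
    exact (limsup_le_limsup (.of_forall hH_le)).trans hx_lim.limsup_eq.le
  calc limsup (fun j => ∫⁻ x in K, g j x ∂μ) atTop
      ≤ limsup (fun j => ∫⁻ x in cthickening r K, H j x ∂μ) atTop :=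
        limsup_le_limsup (.of_forall hle_H)
    _ ≤ ∫⁻ x in cthickening r K, limsup (H · x) atTop ∂μ :=
        limsup_lintegral_le _ hH_meas (fun j => .of_forall (hH_bound j)) (by
          rw [setLIntegral_const]
          exact ENNReal.mul_ne_top (ENNReal.mul_ne_top (ENNReal.inv_ne_top.2 hc₀) hΛ)
            hK.cthickening.measure_lt_top.ne)
    _ ≤ ∫⁻ x in cthickening r K, g₀ x ∂μ := lintegral_mono_ae hH_limsup

lemma tendsto_setLIntegral_of_lintegral_closedBall_le {g : ℕ → E → ℝ≥0∞} {g₀ : E → ℝ≥0∞}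
    (hK : IsCompact K) (hg : ∀ j, AEMeasurable (g j) μ) (hΛ : Λ ≠ ∞)
    (hbound : ∀ j, ∫⁻ x, g j x ∂μ ≤ Λ)
    (hmean : ∀ᶠ r in 𝓝[>] 0, ∀ j, ∀ x ∈ cthickening r K,
      ∫⁻ y in closedBall x r, g j y ∂μ ≤ μ (closedBall x r) * g j x)
    (hlim : ∀ᵐ x ∂μ, Tendsto (g · x) atTop (𝓝 (g₀ x))) :
    Tendsto (fun j => ∫⁻ x in K, g j x ∂μ) atTop (𝓝 (∫⁻ x in K, g₀ x ∂μ)) := by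
  have hfatou : ∀ s : Set E,
      ∫⁻ x in s, g₀ x ∂μ ≤ liminf (fun j => ∫⁻ x in s, g j x ∂μ) atTop :=
    fun s => calc ∫⁻ x in s, g₀ x ∂μ = ∫⁻ x in s, liminf (g · x) atTop ∂μ :=
          lintegral_congr_ae (ae_restrict_of_ae (hlim.mono fun x hx => hx.liminf_eq.symm))
      _ ≤ liminf (fun j => ∫⁻ x in s, g j x ∂μ) atTop :=
          lintegral_liminf_le' fun j => (hg j).restrict
  have hg₀ : ∫⁻ x, g₀ x ∂μ ≠ ∞ := by
    have h := hfatou univ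
    rw [Measure.restrict_univ] at h
    exact ne_top_of_le_ne_top hΛ
      (h.trans ((liminf_le_liminf (.of_forall hbound)).trans_eq (liminf_const Λ)))
  have hthick : Tendsto (fun r => ∫⁻ x in cthickening r K, g₀ x ∂μ) (𝓝 0)
      (𝓝 (∫⁻ x in K, g₀ x ∂μ)) := by
    simpa only [withDensity_apply'] using tendsto_measure_cthickening_of_isClosed
      (μ := μ.withDensity g₀) ⟨1, one_pos, by
        rw [withDensity_apply']
        exact ne_top_of_le_ne_top hg₀ (setLIntegral_le_lintegral _ _)⟩ hK.isClosed
  refine tendsto_of_le_liminf_of_limsup_le (hfatou K) (ge_of_tendsto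
    (hthick.mono_left (nhdsWithin_le_nhds (s := Ioi 0))) ?_)
  filter_upwards [hmean, self_mem_nhdsWithin] with r hr hr_pos
  exact limsup_setLIntegral_le_setLIntegral_cthickening hK hg hΛ hbound hr_pos hr hlim

end AddHaar

section LowerBound

variable {α ι : Type*} [TopologicalSpace α] [T2Space α] [MeasurableSpace α]
  [OpensMeasurableSpace α] {μ : Measure α} [IsFiniteMeasureOnCompacts μ] {f : ι → α → ℝ}
  {U s t K : Set α}

lemma bddBelow_setIntegral_mono (hint : ∀ i, LocallyIntegrableOn (f i) U μ)
    (hbdd : ∀ K, K ⊆ U → IsCompact K → ∃ M, ∀ i, ∀ x ∈ K, f i x ≤ M)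
    (hs : IsCompact s) (hsU : s ⊆ U) (ht : MeasurableSet t) (hts : t ⊆ s)
    (h : BddBelow (range fun i => ∫ x in s, f i x ∂μ)) :
    BddBelow (range fun i => ∫ x in t, f i x ∂μ) := by
  obtain ⟨C, hC⟩ := h
  obtain ⟨M, hM⟩ := hbdd s hsU hs
  refine ⟨C - max M 0 * μ.real s, forall_mem_range.2 fun i => ?_⟩
  exact (sub_le_sub_right (hC (mem_range_self i)) _).trans
    (setIntegral_sub_le_setIntegral_of_subset hs.measurableSet hs.measure_lt_top.ne ht hts
      ((hint i).integrableOn_compact_subset hsU hs) (hM i))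

lemma bddBelow_setIntegral_union (hint : ∀ i, LocallyIntegrableOn (f i) U μ)
    (hbdd : ∀ K, K ⊆ U → IsCompact K → ∃ M, ∀ i, ∀ x ∈ K, f i x ≤ M)
    (hs : IsCompact s) (hsU : s ⊆ U) (ht : IsCompact t) (htU : t ⊆ U)
    (h₁ : BddBelow (range fun i => ∫ x in s, f i x ∂μ))
    (h₂ : BddBelow (range fun i => ∫ x in t, f i x ∂μ)) :
    BddBelow (range fun i => ∫ x in s ∪ t, f i x ∂μ) := by
  obtain ⟨C₁, hC₁⟩ := h₁
  obtain ⟨C₂, hC₂⟩ := bddBelow_setIntegral_mono hint hbdd ht htU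
    (ht.measurableSet.diff hs.measurableSet) sdiff_subset h₂
  refine ⟨C₁ + C₂, forall_mem_range.2 fun i => ?_⟩
  rw [← union_sdiff_self, setIntegral_union disjoint_sdiff_right
    (ht.measurableSet.diff hs.measurableSet) ((hint i).integrableOn_compact_subset hsU hs)
    (((hint i).integrableOn_compact_subset htU ht).mono_set sdiff_subset)]
  exact add_le_add (hC₁ (mem_range_self i)) (hC₂ (mem_range_self i))

lemma IsCompact.bddBelow_setIntegral (hK : IsCompact K)
    (hint : ∀ i, LocallyIntegrableOn (f i) U μ)
    (hbdd : ∀ K, K ⊆ U → IsCompact K → ∃ M, ∀ i, ∀ x ∈ K, f i x ≤ M)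
    (hloc : ∀ x ∈ K, ∃ t ∈ 𝓝 x, IsCompact t ∧ t ⊆ U ∧
      BddBelow (range fun i => ∫ y in t, f i y ∂μ)) :
    BddBelow (range fun i => ∫ x in K, f i x ∂μ) := by
  obtain ⟨t, hKt, ht, htU, hP⟩ : ∃ t, K ⊆ t ∧ IsCompact t ∧ t ⊆ U ∧
      BddBelow (range fun i => ∫ y in t, f i y ∂μ) := by
    refine hK.induction_on ⟨∅, subset_rfl, isCompact_empty, empty_subset U, 0, ?_⟩
      (fun s₁ s₂ hs ⟨t, hst, ht⟩ => ⟨t, hs.trans hst, ht⟩)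
      (fun s₁ s₂ ⟨t₁, hst₁, ht₁, ht₁U, hP₁⟩ ⟨t₂, hst₂, ht₂, ht₂U, hP₂⟩ =>
        ⟨t₁ ∪ t₂, union_subset_union hst₁ hst₂, ht₁.union ht₂, union_subset ht₁U ht₂U,
          bddBelow_setIntegral_union hint hbdd ht₁ ht₁U ht₂ ht₂U hP₁ hP₂⟩)
      (fun x hx => ?_)
    · rintro _ ⟨i, rfl⟩
      simp
    · obtain ⟨t, htx, ht, htU, hP⟩ := hloc x hx
      exact ⟨t, mem_nhdsWithin_of_mem_nhds htx, t, subset_rfl, ht, htU, hP⟩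
  exact bddBelow_setIntegral_mono hint hbdd ht htU hK.measurableSet hKt hP

end LowerBound

def SubMeanValueOn {α : Type*} [PseudoMetricSpace α] [MeasurableSpace α] (μ : Measure α)
    (f : α → ℝ) (U : Set α) : Prop :=
  ∀ x ∈ U, ∀ r > (0 : ℝ), closedBall x r ⊆ U → f x ≤ ⨍ y in closedBall x r, f y ∂μ

lemma SubMeanValueOn.mono {α : Type*} [PseudoMetricSpace α] [MeasurableSpace α]
    {μ : Measure α} {f : α → ℝ} {U V : Set α} (h : SubMeanValueOn μ f U) (hVU : V ⊆ U) :
    SubMeanValueOn μ f V :=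
  fun x hx r hr hB => h x (hVU hx) r hr (hB.trans hVU)

section ProperSpace

variable {α ι : Type*} [PseudoMetricSpace α] [ProperSpace α] [MeasurableSpace α]
  {μ : Measure α} [IsFiniteMeasureOnCompacts μ] [μ.IsOpenPosMeasure] {U : Set α} {x : α} {r : ℝ}

lemma SubMeanValueOn.measureReal_mul_le_setIntegral {f : α → ℝ} (h : SubMeanValueOn μ f U)
    (hx : x ∈ U) (hr : 0 < r) (hB : closedBall x r ⊆ U) :
    μ.real (closedBall x r) * f x ≤ ∫ y in closedBall x r, f y ∂μ :=
  mul_le_setIntegral_of_le_setAverage (measure_closedBall_pos μ x hr).ne'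
    measure_closedBall_lt_top.ne (h x hx r hr hB)

lemma SubMeanValueOn.setLIntegral_closedBall_ofReal_const_sub_le [OpensMeasurableSpace α]
    {f : α → ℝ} (h : SubMeanValueOn μ f U) (hx : x ∈ U) (hr : 0 < r) (hB : closedBall x r ⊆ U)
    (hf : IntegrableOn f (closedBall x r) μ) {M : ℝ} (hM : ∀ y ∈ closedBall x r, f y ≤ M) :
    ∫⁻ y in closedBall x r, ENNReal.ofReal (M - f y) ∂μ
      ≤ μ (closedBall x r) * ENNReal.ofReal (M - f x) := by
  rw [setLIntegral_ofReal_const_sub_eq measurableSet_closedBall measure_closedBall_lt_top.ne hf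
      hM, ← ofReal_measureReal measure_closedBall_lt_top.ne,
    ← ENNReal.ofReal_mul measureReal_nonneg]
  refine ENNReal.ofReal_le_ofReal ?_
  linarith [h.measureReal_mul_le_setIntegral hx hr hB]

lemma bddBelow_setIntegral_closedBall_of_bddBelow {f : ι → α → ℝ}
    (hmean : ∀ i, SubMeanValueOn μ (f i) U)
    (hx : x ∈ U) (hbelow : BddBelow (range (f · x))) (hr : 0 < r)
    (hB : closedBall x r ⊆ U) :
    BddBelow (range fun i => ∫ y in closedBall x r, f i y ∂μ) := by
  obtain ⟨b, hb⟩ := hbelow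
  refine ⟨μ.real (closedBall x r) * b, forall_mem_range.2 fun i => ?_⟩
  exact (mul_le_mul_of_nonneg_left (hb (mem_range_self i)) measureReal_nonneg).trans
    ((hmean i).measureReal_mul_le_setIntegral hx hr hB)

end ProperSpace

section SubMeanValue

variable {E ι : Type*} [NormedAddCommGroup E] [NormedSpace ℝ E] [FiniteDimensional ℝ E]
  [MeasurableSpace E] [BorelSpace E] {μ : Measure E} [μ.IsAddHaarMeasure]
  {U K : Set E} {x : E} {r : ℝ}

/-- Each `f i` has a point `y i` in the small ball `closedBall x' ρ₁` where it is not below its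
average there; the sub-mean value inequality on `closedBall (y i) (3 * ρ)`, which contains
`closedBall x ρ`, then bounds the integrals over `closedBall x ρ` from below. -/
lemma bddBelow_setIntegral_closedBall_of_dist_lt {f : ι → E → ℝ} {M ρ ρ₁ : ℝ} {x' : E}
    (hmean : ∀ i, SubMeanValueOn μ (f i) U)
    (hU : closedBall x (5 * ρ) ⊆ U) (hint : ∀ i, IntegrableOn (f i) (closedBall x (5 * ρ)) μ)
    (hM : ∀ i, ∀ y ∈ closedBall x (5 * ρ), f i y ≤ M) (hx' : dist x' x < ρ)
    (hρ₁ : 0 < ρ₁) (hρ₁ρ : ρ₁ ≤ ρ)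
    (hP : BddBelow (range fun i => ∫ y in closedBall x' ρ₁, f i y ∂μ)) :
    BddBelow (range fun i => ∫ y in closedBall x ρ, f i y ∂μ) := by
  obtain ⟨C, hC⟩ := hP
  have hρ : 0 < ρ := hρ₁.trans_le hρ₁ρ
  have hv₁ : 0 < μ.real (closedBall x' ρ₁) :=
    ENNReal.toReal_pos (measure_closedBall_pos μ x' hρ₁).ne' measure_closedBall_lt_top.ne
  obtain ⟨v₃, hv₃⟩ : ∃ v, ∀ y, μ.real (closedBall y (3 * ρ)) = v :=
    ⟨μ.real (closedBall 0 (3 * ρ)), fun y => by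
      simp only [measureReal_def, μ.addHaar_closedBall_center y]⟩
  refine ⟨v₃ * (C / μ.real (closedBall x' ρ₁)) - max M 0 * v₃, forall_mem_range.2 fun i => ?_⟩
  have hB₁ : closedBall x' ρ₁ ⊆ closedBall x (5 * ρ) :=
    closedBall_subset_closedBall' (by linarith)
  obtain ⟨y, hy, hy_avg⟩ := exists_setAverage_le (measure_closedBall_pos μ x' hρ₁).ne'
    measure_closedBall_lt_top.ne ((hint i).mono_set hB₁)
  have hCy : C / μ.real (closedBall x' ρ₁) ≤ f i y := by
    refine le_trans ?_ hy_avg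
    rw [setAverage_eq, smul_eq_mul, div_eq_inv_mul]
    exact mul_le_mul_of_nonneg_left (hC (mem_range_self i)) (inv_nonneg.2 hv₁.le)
  have hyx : dist y x ≤ 2 * ρ := by
    linarith [dist_triangle y x' x, mem_closedBall.1 hy]
  have hBy : closedBall y (3 * ρ) ⊆ closedBall x (5 * ρ) :=
    closedBall_subset_closedBall' (by linarith)
  have hBx : closedBall x ρ ⊆ closedBall y (3 * ρ) :=
    closedBall_subset_closedBall' (by rw [dist_comm]; linarith)
  have hmean_y : v₃ * (C / μ.real (closedBall x' ρ₁)) ≤ ∫ z in closedBall y (3 * ρ), f i z ∂μ := by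
    refine (mul_le_mul_of_nonneg_left hCy (hv₃ y ▸ measureReal_nonneg)).trans ?_
    rw [← hv₃ y]
    exact (hmean i).measureReal_mul_le_setIntegral (hU (hBy (mem_closedBall_self (by linarith))))
      (by linarith) (hBy.trans hU)
  have hsub := setIntegral_sub_le_setIntegral_of_subset measurableSet_closedBall
    measure_closedBall_lt_top.ne measurableSet_closedBall hBx ((hint i).mono_set hBy)
    fun z hz => hM i z (hBy hz)
  rw [hv₃ y] at hsub
  linarith

lemma bddBelow_setIntegral_of_subMeanValueOn {f : ι → E → ℝ} (hU : IsOpen U)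
    (hUc : IsPreconnected U) (hint : ∀ i, LocallyIntegrableOn (f i) U μ)
    (hbdd : ∀ K, K ⊆ U → IsCompact K → ∃ M, ∀ i, ∀ x ∈ K, f i x ≤ M)
    (hmean : ∀ i, SubMeanValueOn μ (f i) U) {x₀ : E} (hx₀ : x₀ ∈ U)
    (hbelow : BddBelow (range (f · x₀))) (hKU : K ⊆ U) (hK : IsCompact K) :
    BddBelow (range fun i => ∫ x in K, f i x ∂μ) := by
  have hball : ∀ x ∈ U, ∃ ε > 0, closedBall x ε ⊆ U := fun x hx =>
    nhds_basis_closedBall.mem_iff.1 (hU.mem_nhds hx)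
  set S := {x | ∃ ρ > 0, closedBall x ρ ⊆ U ∧
    BddBelow (range fun i => ∫ y in closedBall x ρ, f i y ∂μ)}
  have hS_open : IsOpen S := by
    refine isOpen_iff.2 fun x ⟨ρ, hρ, hBU, hP⟩ => ⟨ρ / 2, half_pos hρ, fun x' hx' => ?_⟩
    have hB : closedBall x' (ρ / 2) ⊆ closedBall x ρ :=
      closedBall_subset_closedBall' (by linarith [mem_ball.1 hx'])
    exact ⟨ρ / 2, half_pos hρ, hB.trans hBU, bddBelow_setIntegral_mono hint hbdd
      (isCompact_closedBall x ρ) hBU measurableSet_closedBall hB hP⟩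
  have hS_closed : closure S ∩ U ⊆ S := by
    rintro x ⟨hx_cl, hxU⟩
    obtain ⟨ε, hε, hεU⟩ := hball x hxU
    have h5U : closedBall x (5 * (ε / 5)) ⊆ U := by
      rwa [mul_div_cancel₀ ε (by norm_num : (5 : ℝ) ≠ 0)]
    obtain ⟨x', ⟨ρ₀, hρ₀, hB₀U, hP₀⟩, hxx'⟩ := mem_closure_iff.1 hx_cl (ε / 5) (by positivity)
    have hP₁ := bddBelow_setIntegral_mono hint hbdd (isCompact_closedBall x' ρ₀) hB₀U
      measurableSet_closedBall (closedBall_subset_closedBall (min_le_left ρ₀ (ε / 5))) hP₀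
    obtain ⟨M, hM⟩ := hbdd _ h5U (isCompact_closedBall _ _)
    refine ⟨ε / 5, by positivity, (closedBall_subset_closedBall (by linarith)).trans hεU, ?_⟩
    refine bddBelow_setIntegral_closedBall_of_dist_lt hmean h5U
      (fun i => (hint i).integrableOn_compact_subset h5U (isCompact_closedBall _ _))
      hM (by rwa [dist_comm]) (lt_min hρ₀ (by positivity)) (min_le_right _ _) hP₁
  have hUS : U ⊆ S := by
    obtain ⟨ε, hε, hεU⟩ := hball x₀ hx₀
    exact hUc.subset_of_closure_inter_subset hS_open
      ⟨x₀, hx₀, ε, hε, hεU, bddBelow_setIntegral_closedBall_of_bddBelow hmean hx₀ hbelow hε hεU⟩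
      hS_closed
  refine hK.bddBelow_setIntegral hint hbdd fun x hx => ?_
  obtain ⟨ρ, hρ, hBU, hP⟩ := hUS (hKU hx)
  exact ⟨closedBall x ρ, closedBall_mem_nhds x hρ, isCompact_closedBall x ρ, hBU, hP⟩

lemma tendsto_setLIntegral_ofReal_const_sub {f : ℕ → E → ℝ} {f₀ : E → ℝ} {δ M C : ℝ}
    (hK : IsCompact K) (hδ : 0 < δ)
    (hmean : ∀ j, SubMeanValueOn μ (f j) (cthickening δ K))
    (hint : ∀ j, IntegrableOn (f j) (cthickening δ K) μ)
    (hM : ∀ j, ∀ x ∈ cthickening δ K, f j x ≤ M)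
    (hC : ∀ j, C ≤ ∫ x in cthickening δ K, f j x ∂μ)
    (hlim : ∀ᵐ x ∂μ.restrict (cthickening δ K), Tendsto (f · x) atTop (𝓝 (f₀ x))) :
    Tendsto (fun j => ∫⁻ x in K, ENNReal.ofReal (M - f j x) ∂μ) atTop
      (𝓝 (∫⁻ x in K, ENNReal.ofReal (M - f₀ x) ∂μ)) := by
  have hK' : MeasurableSet (cthickening δ K) := isClosed_cthickening.measurableSet
  set g : ℕ → E → ℝ≥0∞ := fun j =>
    (cthickening δ K).indicator fun x => ENNReal.ofReal (M - f j x)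
  set g₀ : E → ℝ≥0∞ := (cthickening δ K).indicator fun x => ENNReal.ofReal (M - f₀ x)
  have hg : ∀ j, AEMeasurable (g j) μ := fun j => (aemeasurable_indicator_iff hK').2
    (ENNReal.measurable_ofReal.comp_aemeasurable (aemeasurable_const.sub (hint j).aemeasurable))
  have hbound : ∀ j, ∫⁻ x, g j x ∂μ ≤ ENNReal.ofReal (M * μ.real (cthickening δ K) - C) :=
    fun j => by
      rw [lintegral_indicator hK']
      exact setLIntegral_ofReal_const_sub_le hK' hK.cthickening.measure_lt_top.ne (hint j) (hM j)
        (hC j)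
  have hmean' : ∀ᶠ r in 𝓝[>] 0, ∀ j, ∀ x ∈ cthickening r K,
      ∫⁻ y in closedBall x r, g j y ∂μ ≤ μ (closedBall x r) * g j x := by
    filter_upwards [Ioc_mem_nhdsGT (half_pos hδ)] with r ⟨hr, hrδ⟩ j x hx
    have hB : closedBall x r ⊆ cthickening δ K :=
      (closedBall_subset_cthickening hx r).trans
        ((cthickening_cthickening_subset hr.le hr.le K).trans (cthickening_mono (by linarith) K))
    have hxK' := hB (mem_closedBall_self hr.le)
    rw [setLIntegral_congr_fun measurableSet_closedBall fun y hy => indicator_of_mem (hB hy) _,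
      show g j x = ENNReal.ofReal (M - f j x) from indicator_of_mem hxK' _]
    exact (hmean j).setLIntegral_closedBall_ofReal_const_sub_le hxK' hr hB
      ((hint j).mono_set hB) fun y hy => hM j y (hB hy)
  have hglim : ∀ᵐ x ∂μ, Tendsto (g · x) atTop (𝓝 (g₀ x)) := by
    filter_upwards [(ae_restrict_iff' hK').1 hlim] with x hx
    by_cases hxK' : x ∈ cthickening δ K
    · simpa only [g, g₀, indicator_of_mem hxK'] using
        ENNReal.tendsto_ofReal ((hx hxK').const_sub M)
    · simpa only [g, g₀, indicator_of_notMem hxK'] using tendsto_const_nhds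
  have hK_ind : ∀ {h : E → ℝ},
      ∫⁻ x in K, (cthickening δ K).indicator (fun x => ENNReal.ofReal (M - h x)) x ∂μ
        = ∫⁻ x in K, ENNReal.ofReal (M - h x) ∂μ :=
    setLIntegral_congr_fun hK.measurableSet fun x hx =>
      indicator_of_mem (self_subset_cthickening K hx) _
  simpa only [g, g₀, hK_ind] using tendsto_setLIntegral_of_lintegral_closedBall_le hK hg
    ENNReal.ofReal_ne_top hbound hmean' hglim

theorem tendsto_setIntegral_abs_sub_of_subMeanValueOn {f : ℕ → E → ℝ} {f₀ : E → ℝ}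
    {δ M C : ℝ} (hK : IsCompact K) (hδ : 0 < δ)
    (hmean : ∀ j, SubMeanValueOn μ (f j) (cthickening δ K))
    (hint : ∀ j, IntegrableOn (f j) (cthickening δ K) μ)
    (hM : ∀ j, ∀ x ∈ cthickening δ K, f j x ≤ M)
    (hC : ∀ j, C ≤ ∫ x in cthickening δ K, f j x ∂μ)
    (hlim : ∀ᵐ x ∂μ.restrict (cthickening δ K), Tendsto (f · x) atTop (𝓝 (f₀ x))) :
    Tendsto (fun j => ∫ x in K, |f j x - f₀ x| ∂μ) atTop (𝓝 0) := by
  have hKK' : K ⊆ cthickening δ K := self_subset_cthickening K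
  have hK'fin : μ (cthickening δ K) ≠ ∞ := hK.cthickening.measure_lt_top.ne
  have hF : ∀ j, Integrable (fun x => M - f j x) (μ.restrict K) := fun j =>
    ((integrableOn_const hK'fin : IntegrableOn (fun _ => M) _ μ).sub (hint j)).mono_set hKK'
  have hF₀ : ∀ j, 0 ≤ᵐ[μ.restrict K] fun x => M - f j x := fun j =>
    (ae_restrict_mem hK.measurableSet).mono fun x hx => sub_nonneg.2 (hM j x (hKK' hx))
  have hlimK : ∀ᵐ x ∂μ.restrict K, Tendsto (fun j => M - f j x) atTop (𝓝 (M - f₀ x)) :=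
    ae_restrict_of_ae_restrict_of_subset hKK' (hlim.mono fun x hx => hx.const_sub M)
  have hlint := tendsto_setLIntegral_ofReal_const_sub hK hδ hmean hint hM hC hlim
  have hfin : ∫⁻ x in K, ENNReal.ofReal (M - f₀ x) ∂μ ≠ ∞ :=
    ne_top_of_le_ne_top ENNReal.ofReal_ne_top (le_of_tendsto' hlint fun j =>
      (lintegral_mono_set hKK').trans (setLIntegral_ofReal_const_sub_le
        isClosed_cthickening.measurableSet hK'fin (hint j) (hM j) (hC j)))
  have hG₀ : 0 ≤ᵐ[μ.restrict K] fun x => M - f₀ x :=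
    (hlimK.and (ae_all_iff.2 hF₀)).mono fun x hx => ge_of_tendsto' hx.1 hx.2
  have hG : Integrable (fun x => M - f₀ x) (μ.restrict K) :=
    ⟨aestronglyMeasurable_of_tendsto_ae atTop (fun j => (hF j).aestronglyMeasurable) hlimK,
      (hasFiniteIntegral_iff_ofReal hG₀).2 hfin.lt_top⟩
  have hint_lim :
      Tendsto (fun j => ∫ x in K, M - f j x ∂μ) atTop (𝓝 (∫ x in K, M - f₀ x ∂μ)) := by
    have hF_eq : ∀ j,
        ∫ x in K, M - f j x ∂μ = (∫⁻ x in K, ENNReal.ofReal (M - f j x) ∂μ).toReal :=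
      fun j => integral_eq_lintegral_of_nonneg_ae (hF₀ j) (hF j).aestronglyMeasurable
    simp only [hF_eq, integral_eq_lintegral_of_nonneg_ae hG₀ hG.aestronglyMeasurable]
    exact (ENNReal.tendsto_toReal hfin).comp hlint
  simpa only [sub_sub_sub_cancel_left, abs_sub_comm] using
    tendsto_integral_abs_sub_of_tendsto_integral hF hG hF₀ hlimK hint_lim

end SubMeanValue

theorem compactness_principle_subharmonic {n : ℕ}
    (U : Set (EuclideanSpace ℝ (Fin n))) (hU : IsOpen U) (hUc : IsConnected U)
    (φseq : ℕ → EuclideanSpace ℝ (Fin n) → ℝ)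
    (hsub : ∀ j, SubharmonicOn (φseq j) U)
    (hbdd : ∀ K : Set (EuclideanSpace ℝ (Fin n)), K ⊆ U → IsCompact K →
      ∃ M : ℝ, ∀ j, ∀ x ∈ K, φseq j x ≤ M)
    (φ : EuclideanSpace ℝ (Fin n) → ℝ)
    (hconv : ∀ᵐ x ∂(volume.restrict U),
      Filter.Tendsto (fun j => φseq j x) Filter.atTop (nhds (φ x))) :
    ∀ K : Set (EuclideanSpace ℝ (Fin n)), K ⊆ U → IsCompact K →
      Filter.Tendsto (fun j => ∫ x in K, |φseq j x - φ x| ∂volume)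
        Filter.atTop (nhds 0) := by
  intro K hKU hK
  obtain ⟨δ, hδ, hδU⟩ := hK.exists_thickening_subset_open hU hKU
  have hK'U : cthickening (δ / 2) K ⊆ U :=
    (cthickening_subset_thickening' hδ (half_lt_self hδ) K).trans hδU
  have hK' : IsCompact (cthickening (δ / 2) K) := hK.cthickening
  obtain ⟨M, hM⟩ := hbdd _ hK'U hK'
  obtain ⟨x₀, hx₀, hx₀U⟩ : ∃ x₀, Tendsto (φseq · x₀) atTop (𝓝 (φ x₀)) ∧ x₀ ∈ U := by
    have : (ae (volume.restrict U)).NeBot :=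
      ae_restrict_neBot.2 (hU.measure_pos volume hUc.nonempty).ne'
    exact (hconv.and (ae_restrict_mem hU.measurableSet)).exists
  obtain ⟨C, hC⟩ := bddBelow_setIntegral_of_subMeanValueOn hU hUc.isPreconnected
    (fun j => (hsub j).2.1) hbdd (fun j => (hsub j).2.2) hx₀U hx₀.bddBelow_range hK'U hK'
  exact tendsto_setIntegral_abs_sub_of_subMeanValueOn hK (half_pos hδ)
    (fun j => SubMeanValueOn.mono (hsub j).2.2 hK'U)
    (fun j => (hsub j).2.1.integrableOn_compact_subset hK'U hK') hM
    (fun j => hC ⟨j, rfl⟩) (ae_restrict_of_ae_restrict_of_subset hK'U hconv)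
end

section
/- Let f be a holomorphic self-map of the unit disc 𝔻 that is not injective and not an elliptic automorphism. If there exists a point c ∈ 𝔻 and a subsequence (n_k) with f^{n_k}(c) → c and moreover dist(f^{n_k}(c), c) ≤ exp(−ε·d^{n_k}) for some ε > 0 and d > 1, then c is an attracting fixed point of f (i.e. f(c) = c and |f'(c)| < 1). -/
/-!
By Montel's theorem a subsequence of the iterates `f^[n k]` converges locally uniformly on the
disc to some `h`, and a subsequence of the gap iterates `f^[n (k + 1) - n k]` converges to some `g`.
Then `h c = c` and `g ∘ h = h` near `c`. If `h` is not constant it is open at `c`, so `g` is the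
identity near `c`, hence on the whole disc; but then `f^[m] a → a` along the gaps for every `a`,
which makes `f` injective. So `h ≡ c`: this gives `f c = c`, and `(f^[n k])' c = (f' c) ^ n k → 0`
gives `‖f' c‖ < 1`.

Montel's theorem is proved by extracting a coordinatewise convergent subsequence of the Taylor
coefficients at the centre, which the Cauchy estimates confine to a compact product of discs.
-/

open Metric Filter

/-- `f` is an elliptic automorphism of the open unit disc: a holomorphic
bijection of the disc onto itself with a fixed point inside the disc. -/
def IsEllipticAutomorphism (f : ℂ → ℂ) : Prop :=
  Set.BijOn f (ball (0 : ℂ) 1) (ball (0 : ℂ) 1) ∧ ∃ z ∈ ball (0 : ℂ) 1, f z = z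

open Set Function Topology

noncomputable def taylorCoeff (f : ℂ → ℂ) (c : ℂ) (j : ℕ) : ℂ :=
  (j.factorial : ℂ)⁻¹ * iteratedDeriv j f c

theorem norm_taylorCoeff_le {f : ℂ → ℂ} {c : ℂ} {R B : ℝ} (hR : 0 < R)
    (hf : DifferentiableOn ℂ f (ball c R)) (hB : ∀ z ∈ ball c R, ‖f z‖ ≤ B) (j : ℕ) :
    ‖taylorCoeff f c j‖ ≤ B / R ^ j := by
  have hcauchy : ∀ r ∈ Ioo 0 R, ‖taylorCoeff f c j‖ ≤ B / r ^ j := fun r ⟨hr0, hrR⟩ => by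
    have := Complex.norm_iteratedDeriv_le_of_forall_mem_sphere_norm_le j hr0
      (hf.diffContOnCl_ball (closedBall_subset_ball hrR))
      fun z hz => hB z (sphere_subset_closedBall.trans (closedBall_subset_ball hrR) hz)
    rw [mul_div_assoc] at this
    rw [taylorCoeff, norm_mul, norm_inv, Complex.norm_natCast]
    exact (inv_mul_le_iff₀ (by positivity)).2 this
  have hcont : ContinuousAt (fun r : ℝ => B / r ^ j) R :=
    continuousAt_const.div (continuousAt_id.pow j) (pow_ne_zero j hR.ne')
  refine ge_of_tendsto (hcont.tendsto.mono_left (nhdsWithin_le_nhds (s := Iio R))) ?_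
  filter_upwards [Ioo_mem_nhdsLT hR] with r hr using hcauchy r hr

theorem tendstoUniformlyOn_tsum_mul_pow {ι : Type*} {l : Filter ι} {a : ι → ℕ → ℂ} {α : ℕ → ℂ}
    {c : ℂ} {C R s : ℝ} (hsR : s < R) (ha : ∀ i j, ‖a i j‖ ≤ C / R ^ j)
    (hα : ∀ j, ‖α j‖ ≤ C / R ^ j) (hlim : ∀ j, Tendsto (a · j) l (𝓝 (α j))) :
    TendstoUniformlyOn (fun i z => ∑' j, a i j * (z - c) ^ j)
      (fun z => ∑' j, α j * (z - c) ^ j) l (closedBall c s) := by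
  rcases lt_or_ge s 0 with hs | hs
  · rw [closedBall_eq_empty.2 hs]
    exact tendstoUniformlyOn_empty
  have hR : 0 < R := hs.trans_lt hsR
  have hgeom : Summable fun j => C * (s / R) ^ j :=
    (summable_geometric_of_lt_one (by positivity) ((div_lt_one hR).2 hsR)).mul_left _
  have hdiff : ∀ i j, ‖a i j - α j‖ * s ^ j ≤ 2 * (C * (s / R) ^ j) := fun i j =>
    calc ‖a i j - α j‖ * s ^ j ≤ (C / R ^ j + C / R ^ j) * s ^ j := by
          gcongr; exact (norm_sub_le _ _).trans (add_le_add (ha i j) (hα j))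
      _ = 2 * (C * (s / R) ^ j) := by rw [div_pow]; ring
  have hsummable : ∀ (b : ℕ → ℂ), (∀ j, ‖b j‖ ≤ C / R ^ j) → ∀ z ∈ closedBall c s,
      Summable fun j => b j * (z - c) ^ j := fun b hb z hz =>
    hgeom.of_norm_bounded fun j =>
      calc ‖b j * (z - c) ^ j‖ ≤ C / R ^ j * s ^ j := by
            rw [norm_mul, norm_pow]
            exact mul_le_mul (hb j)
              (pow_le_pow_left₀ (norm_nonneg _) (mem_closedBall_iff_norm.1 hz) j)
              (by positivity) ((norm_nonneg _).trans (hb j))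
        _ = C * (s / R) ^ j := by rw [div_pow]; ring
  have hT : Tendsto (fun i => ∑' j, ‖a i j - α j‖ * s ^ j) l (𝓝 0) := by
    have := tendsto_tsum_of_dominated_convergence (hgeom.mul_left 2)
      (fun j => by simpa using ((hlim j).sub_const (α j)).norm.mul_const (s ^ j))
      (.of_forall fun i j => by rw [Real.norm_of_nonneg (by positivity)]; exact hdiff i j)
    rwa [tsum_zero] at this
  rw [Metric.tendstoUniformlyOn_iff]
  intro ε hε
  filter_upwards [hT.eventually (gt_mem_nhds hε)] with i hi z hz
  calc dist (∑' j, α j * (z - c) ^ j) (∑' j, a i j * (z - c) ^ j)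
      = ‖∑' j, (a i j - α j) * (z - c) ^ j‖ := by
        rw [dist_comm, dist_eq_norm, ← (hsummable _ (ha i) z hz).tsum_sub (hsummable _ hα z hz)]
        simp only [sub_mul]
    _ ≤ ∑' j, ‖a i j - α j‖ * s ^ j := by
        refine tsum_of_norm_bounded ((hgeom.mul_left 2).of_nonneg_of_le (fun j => by positivity)
          (hdiff i)).hasSum fun j => ?_
        rw [norm_mul, norm_pow]
        gcongr
        exact mem_closedBall_iff_norm.1 hz
    _ < ε := hi

theorem exists_subseq_tendstoLocallyUniformlyOn_of_norm_le {F : ℕ → ℂ → ℂ} {c : ℂ} {R B : ℝ}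
    (hF : ∀ k, DifferentiableOn ℂ (F k) (ball c R)) (hB : ∀ k, ∀ z ∈ ball c R, ‖F k z‖ ≤ B) :
    ∃ φ : ℕ → ℕ, StrictMono φ ∧ ∃ g : ℂ → ℂ,
      TendstoLocallyUniformlyOn (fun k => F (φ k)) g atTop (ball c R) := by
  rcases le_or_gt R 0 with hR | hR
  · refine ⟨id, strictMono_id, 0, ?_⟩
    rw [ball_eq_empty.2 hR]
    exact tendstoUniformlyOn_empty.tendstoLocallyUniformlyOn
  have hcoeff : ∀ k j, ‖taylorCoeff (F k) c j‖ ≤ B / R ^ j := fun k =>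
    norm_taylorCoeff_le hR (hF k) (hB k)
  obtain ⟨α, hα, φ, hφ, hlim⟩ :=
    (isCompact_univ_pi fun j => isCompact_closedBall (0 : ℂ) (B / R ^ j)).tendsto_subseq
      (x := fun k j => taylorCoeff (F k) c j)
      fun k => mem_univ_pi.2 fun j => mem_closedBall_zero_iff.2 (hcoeff k j)
  refine ⟨φ, hφ, fun z => ∑' j, α j * (z - c) ^ j,
    tendstoLocallyUniformlyOn_of_forall_exists_nhds fun x hx => ?_⟩
  obtain ⟨s, hxs, hsR⟩ := exists_between (mem_ball.1 hx)
  refine ⟨closedBall c s, mem_nhdsWithin_of_mem_nhds (closedBall_mem_nhds_of_mem hxs), ?_⟩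
  refine (tendstoUniformlyOn_tsum_mul_pow hsR (fun k => hcoeff (φ k))
    (fun j => mem_closedBall_zero_iff.1 (hα j (mem_univ j))) (tendsto_pi_nhds.1 hlim)).congr
    (.of_forall fun k z hz => ?_)
  exact Complex.taylorSeries_eq_on_ball' (closedBall_subset_ball hsR hz) (hF (φ k))

section Iterates

variable {ι : Type*} {l : Filter ι} [l.NeBot]

theorem apply_eq_self_of_tendstoLocallyUniformlyOn_iterate_sub {X : Type*} [UniformSpace X]
    [T2Space X] {f g : X → X} {U : Set X} {p q : ι → ℕ} (hpq : ∀ i, p i ≤ q i) {x y : X}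
    (hp : Tendsto (fun i => f^[p i] x) l (𝓝 y))
    (hq : Tendsto (fun i => f^[q i] x) l (𝓝 y))
    (hg : TendstoLocallyUniformlyOn (fun i => f^[q i - p i]) g l U)
    (hgy : ContinuousWithinAt g U y) (hU : U ∈ 𝓝 y) : g y = y := by
  refine tendsto_nhds_unique (hg.tendsto_comp hgy (mem_of_mem_nhds hU)
    (tendsto_nhdsWithin_iff.2 ⟨hp, hp.eventually_mem hU⟩)) ?_
  simpa only [← iterate_add_apply, Nat.sub_add_cancel (hpq _)] using hq

theorem injOn_of_tendsto_iterate_apply_self {X : Type*} [TopologicalSpace X] [T2Space X]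
    {f : X → X} {S : Set X} {m : ι → ℕ}
    (hm : ∀ i, m i ≠ 0) (h : ∀ x ∈ S, Tendsto (fun i => f^[m i] x) l (𝓝 x)) : InjOn f S := by
  intro a ha b hb hab
  have hiter : ∀ i, f^[m i] a = f^[m i] b := fun i => by
    obtain ⟨k, hk⟩ := Nat.exists_eq_succ_of_ne_zero (hm i)
    rw [hk, iterate_succ_apply, iterate_succ_apply, hab]
  exact tendsto_nhds_unique (h a ha) (by simpa only [hiter] using h b hb)

theorem apply_eq_self_of_tendsto_iterate {X : Type*} [TopologicalSpace X] [T2Space X]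
    {f : X → X} {c : X} {n : ι → ℕ}
    (hf : ContinuousAt f c) (hc : Tendsto (fun i => f^[n i] c) l (𝓝 c))
    (hfc : Tendsto (fun i => f^[n i] (f c)) l (𝓝 c)) : f c = c :=
  tendsto_nhds_unique (hf.tendsto.comp hc)
    (by simpa only [comp_def, (Commute.iterate_self f _).eq] using hfc)

theorem norm_deriv_lt_one_of_tendsto_deriv_iterate {f : ℂ → ℂ} {c : ℂ} {n : ι → ℕ}
    (hf : DifferentiableAt ℂ f c) (hfc : f c = c)
    (hlim : Tendsto (fun i => deriv f^[n i] c) l (𝓝 0)) : ‖deriv f c‖ < 1 := by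
  have hpow : ∀ k, deriv f^[k] c = deriv f c ^ k := fun k =>
    (HasDerivAt.iterate c hf.hasDerivAt hfc k).deriv
  by_contra! hge
  obtain ⟨i, hi⟩ := (hlim.norm.eventually (gt_mem_nhds (by norm_num : ‖(0 : ℂ)‖ < 1))).exists
  rw [hpow, norm_pow] at hi
  exact hi.not_ge (one_le_pow₀ hge)

theorem fixed_and_norm_deriv_lt_one_of_tendstoLocallyUniformlyOn_iterate_const {f : ℂ → ℂ}
    {U : Set ℂ} {c : ℂ} {n : ι → ℕ} (hU : IsOpen U)
    (hf : DifferentiableOn ℂ f U) (hfU : MapsTo f U U) (hc : c ∈ U)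
    (hlim : TendstoLocallyUniformlyOn (fun i => f^[n i]) (fun _ => c) l U) :
    f c = c ∧ ‖deriv f c‖ < 1 := by
  have hfc : f c = c := apply_eq_self_of_tendsto_iterate
    (hf.continuousOn.continuousAt (hU.mem_nhds hc)) (hlim.tendsto_at hc) (hlim.tendsto_at (hfU hc))
  refine ⟨hfc, norm_deriv_lt_one_of_tendsto_deriv_iterate (l := l) (n := n)
    (hf.differentiableAt (hU.mem_nhds hc)) hfc ?_⟩
  simpa using (hlim.deriv (.of_forall fun i => hf.iterate hfU (n i)) hU).tendsto_at hc

end Iterates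

theorem eqOn_const_of_tendstoLocallyUniformlyOn_iterate {f h : ℂ → ℂ} {c : ℂ} {n : ℕ → ℕ}
    (hf : DifferentiableOn ℂ f (ball 0 1)) (hmaps : MapsTo f (ball 0 1) (ball 0 1))
    (hni : ¬ InjOn f (ball 0 1)) (hc : c ∈ ball (0 : ℂ) 1) (hn : StrictMono n)
    (hh : TendstoLocallyUniformlyOn (fun k => f^[n k]) h atTop (ball 0 1)) (hhc : h c = c) :
    EqOn h (fun _ => c) (ball 0 1) := by
  obtain ⟨ψ, hψ, g, hg⟩ := exists_subseq_tendstoLocallyUniformlyOn_of_norm_le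
    (fun k => hf.iterate hmaps (n (k + 1) - n k))
    fun k z hz => (mem_ball_zero_iff.1 (hmaps.iterate _ hz)).le
  have hhD : DifferentiableOn ℂ h (ball 0 1) :=
    hh.differentiableOn (.of_forall fun k => hf.iterate hmaps _) isOpen_ball
  have hgD : DifferentiableOn ℂ g (ball 0 1) :=
    hg.differentiableOn (.of_forall fun k => hf.iterate hmaps _) isOpen_ball
  have hgh : ∀ᶠ z in 𝓝 c, g (h z) = h z := by
    have hhz : ∀ᶠ z in 𝓝 c, h z ∈ ball 0 1 :=
      (hhD.continuousOn.continuousAt (isOpen_ball.mem_nhds hc)).eventually_mem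
        (by rw [hhc]; exact isOpen_ball.mem_nhds hc)
    filter_upwards [hhz, isOpen_ball.mem_nhds hc] with z hhz hz
    exact apply_eq_self_of_tendstoLocallyUniformlyOn_iterate_sub
      (fun k => (hn (ψ k).lt_succ_self).le) ((hh.tendsto_at hz).comp hψ.tendsto_atTop)
      ((hh.tendsto_at hz).comp ((tendsto_add_atTop_nat 1).comp hψ.tendsto_atTop)) hg
      (hgD.continuousOn.continuousWithinAt hhz) (isOpen_ball.mem_nhds hhz)
  rcases (hhD.analyticAt (isOpen_ball.mem_nhds hc)).eventually_constant_or_nhds_le_map_nhds with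
    hconst | hopen
  · exact (hhD.analyticOnNhd isOpen_ball).eqOn_of_preconnected_of_eventuallyEq analyticOnNhd_const
      (convex_ball 0 1).isPreconnected hc (hconst.mono fun z hz => hz.trans hhc)
  · have hgc : ∀ᶠ z in 𝓝 (h c), g z = z := hopen hgh
    rw [hhc] at hgc
    have hgid : EqOn g id (ball 0 1) :=
      (hgD.analyticOnNhd isOpen_ball).eqOn_of_preconnected_of_eventuallyEq analyticOnNhd_id
        (convex_ball 0 1).isPreconnected hc hgc
    refine (hni (injOn_of_tendsto_iterate_apply_self (l := atTop)
      (fun k => (Nat.sub_pos_of_lt (hn (ψ k).lt_succ_self)).ne') fun z hz => ?_)).elim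
    simpa only [hgid hz, id] using hg.tendsto_at hz

theorem denjoy_wolff_superattracting_general (f : ℂ → ℂ)
    (hf : DifferentiableOn ℂ f (ball (0 : ℂ) 1))
    (hmaps : Set.MapsTo f (ball (0 : ℂ) 1) (ball (0 : ℂ) 1))
    (hni : ¬ Set.InjOn f (ball (0 : ℂ) 1))
    (c : ℂ) (hc : c ∈ ball (0 : ℂ) 1)
    (nk : ℕ → ℕ) (hnk : StrictMono nk)
    (hto : Tendsto (fun k => f^[nk k] c) atTop (nhds c)) :
    f c = c ∧ ‖deriv f c‖ < 1 := by
  obtain ⟨φ, hφ, h, hh⟩ := exists_subseq_tendstoLocallyUniformlyOn_of_norm_le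
    (fun k => hf.iterate hmaps (nk k)) fun k z hz => (mem_ball_zero_iff.1 (hmaps.iterate _ hz)).le
  have hhc : h c = c := tendsto_nhds_unique (hh.tendsto_at hc) (hto.comp hφ.tendsto_atTop)
  have hconst : EqOn h (fun _ => c) (ball 0 1) :=
    eqOn_const_of_tendstoLocallyUniformlyOn_iterate hf hmaps hni hc (hnk.comp hφ) hh hhc
  exact fixed_and_norm_deriv_lt_one_of_tendstoLocallyUniformlyOn_iterate_const isOpen_ball hf
    hmaps hc (hh.congr_right hconst)

theorem denjoy_wolff_superattracting (f : ℂ → ℂ)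
    (hf : DifferentiableOn ℂ f (ball (0 : ℂ) 1))
    (hmaps : Set.MapsTo f (ball (0 : ℂ) 1) (ball (0 : ℂ) 1))
    (hni : ¬ Set.InjOn f (ball (0 : ℂ) 1))
    (hna : ¬ IsEllipticAutomorphism f)
    (c : ℂ) (hc : c ∈ ball (0 : ℂ) 1)
    (nk : ℕ → ℕ) (hnk : StrictMono nk)
    (hto : Tendsto (fun k => f^[nk k] c) atTop (nhds c))
    (ε : ℝ) (hε : 0 < ε) (d : ℝ) (hd : 1 < d)
    (hfast : ∀ k, dist (f^[nk k] c) c ≤ Real.exp (-ε * d ^ (nk k))) :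
    f c = c ∧ ‖deriv f c‖ < 1 :=
  denjoy_wolff_superattracting_general f hf hmaps hni c hc nk hnk hto
end
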